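/- arXiv:1911.13266 — 6 statements merged into one kernel-verified Lean document; each statement's English description precedes it below -/
import Mathlib

section
/- Let A be an abelian category, H : T → A a homological functor on a triangulated category, and suppose given for each i ≥ 0 a morphism of triangles from (Σ^{-1}X → Y^{i+1} → Y_{i+1} → X) to (Σ^{-1}X → Y^i → Y_i → X) which is the identity on Σ^{-1}X and X, with middle-right component ψ_i : Y_{i+1} → Y_i. If H(ψ_i) = 0 and H(Σ^{-1}ψ_i) = 0 for all i, then for each i ≥ 2 the object H(Y^i) decomposes as H(Y_i) ⊕ H(Σ^{-1}X), the inverse tower (H(Y^i))_{i≥2} is the direct sum of the tower (H(Y_i)) with zero connecting maps and the constant tower H(Σ^{-1}X) with identity maps; consequently lim H(Y^i) ≅ H(Σ^{-1}X) and lim^1 H(Y^i) = 0. -/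
open CategoryTheory CategoryTheory.Limits CategoryTheory.Pretriangulated

universe u v

/-- given a homological functor `H : T ⥤ A` and a ladder of morphisms of
triangles `(Σ⁻¹X → Y^{i+1} → Y_{i+1} → X) ⟶ (Σ⁻¹X → Y^i → Y_i → X)` which are the
identity on the two ends, if `H(ψ_i) = 0 = H(Σ⁻¹ψ_i)` for all `i`, then for `i ≥ 2`
the tower `(H(Y^i))` splits as the direct sum of the tower `(H(Y_i))` with zero
connecting maps and the constant tower `H(Σ⁻¹X)`; consequently
`lim H(Y^i) ≅ H(Σ⁻¹X)` and `lim¹ H(Y^i) = 0`. -/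
theorem tower_splitting_and_lim {T : Type u} [Category.{u} T] [Preadditive T]
    [HasZeroObject T] [HasShift T ℤ] [∀ n : ℤ, (shiftFunctor T n).Additive]
    [Pretriangulated T]
    {A : Type v} [Category.{v} A] [Abelian A] [HasProducts.{0} A]
    (H : T ⥤ A) [H.IsHomological]
    (X : T) (Y' Y : ℕ → T)
    (f : ∀ i, (X⟦(-1 : ℤ)⟧ : T) ⟶ Y' i) (g : ∀ i, Y' i ⟶ Y i) (h : ∀ i, Y i ⟶ X)
    (δ : ∀ i, Y' (i + 1) ⟶ Y' i) (ψ : ∀ i, Y (i + 1) ⟶ Y i)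
    (htri : ∀ i, Triangle.mk (f i) (g i)
      (h i ≫ ((shiftFunctorCompIsoId T (-1 : ℤ) (1 : ℤ) (by norm_num)).app X).inv)
        ∈ distTriang T)
    (hsq₁ : ∀ i, f (i + 1) ≫ δ i = f i)
    (hsq₂ : ∀ i, g (i + 1) ≫ ψ i = δ i ≫ g i)
    (hsq₃ : ∀ i, h (i + 1) = ψ i ≫ h i)
    (hψ : ∀ i, H.map (ψ i) = 0)
    (hψ' : ∀ i, H.map ((ψ i)⟦(-1 : ℤ)⟧') = 0) :
    (∃ e : ∀ i, H.obj (Y' (i + 2)) ≅ H.obj (Y (i + 2)) ⊞ H.obj (X⟦(-1 : ℤ)⟧),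
      ∀ i, H.map (δ (i + 2)) ≫ (e i).hom =
        (e (i + 1)).hom ≫ biprod.map (0 : H.obj (Y (i + 3)) ⟶ H.obj (Y (i + 2)))
          (𝟙 (H.obj (X⟦(-1 : ℤ)⟧)))) ∧
    Nonempty (kernel (𝟙 (∏ᶜ fun i => H.obj (Y' i)) -
        Pi.lift (fun i => Pi.π (fun j => H.obj (Y' j)) (i + 1) ≫ H.map (δ i)))
      ≅ H.obj (X⟦(-1 : ℤ)⟧)) ∧
    IsZero (cokernel (𝟙 (∏ᶜ fun i => H.obj (Y' i)) -
        Pi.lift (fun i => Pi.π (fun j => H.obj (Y' j)) (i + 1) ≫ H.map (δ i)))) := by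
  -- basic composition zero facts
  have hfg : ∀ i, H.map (f i) ≫ H.map (g i) = 0 := fun i => by
    rw [← H.map_comp]
    rw [show f i ≫ g i = 0 from comp_distTriang_mor_zero₁₂ _ (htri i), H.map_zero]
  have hδg : ∀ i, H.map (δ i) ≫ H.map (g i) = 0 := fun i => by
    rw [← H.map_comp, ← hsq₂, H.map_comp, hψ, comp_zero]
  -- exactness at the middle term
  have hex : ∀ i, (ShortComplex.mk (H.map (f i)) (H.map (g i)) (hfg i)).Exact := fun i => by
    have := H.map_distinguished_exact _ (htri i)
    exact this
  -- mono / epi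
  have hmono : ∀ i, Mono (H.map (f (i + 1))) := fun i => by
    have hz : H.map ((Triangle.mk (f (i+1)) (g (i+1))
        (h (i+1) ≫ ((shiftFunctorCompIsoId T (-1 : ℤ) (1 : ℤ) (by norm_num)).app X).inv)).invRotate.mor₁) = 0 := by
      have e' : H.map ((h (i+1))⟦(-1 : ℤ)⟧') = 0 := by
        rw [hsq₃, Functor.map_comp, H.map_comp, hψ', zero_comp]
      show H.map (-(h (i+1) ≫ ((shiftFunctorCompIsoId T (-1 : ℤ) (1 : ℤ) (by norm_num)).app X).inv)⟦(-1 : ℤ)⟧' ≫ _) = 0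
      have key : ∀ {P Q R W : T} (a : P ⟶ Q) (b : Q ⟶ R) (c : (shiftFunctor T (-1 : ℤ)).obj R ⟶ W),
          H.map ((shiftFunctor T (-1 : ℤ)).map a) = 0 →
          H.map (-(shiftFunctor T (-1 : ℤ)).map (a ≫ b) ≫ c) = 0 := by
        intro P Q R W a b c ha
        have hh : (-(shiftFunctor T (-1 : ℤ)).map (a ≫ b) ≫ c)
            = (shiftFunctor T (-1 : ℤ)).map a ≫ (-((shiftFunctor T (-1 : ℤ)).map b ≫ c)) := by
          simp [Functor.map_comp]
        rw [hh, H.map_comp, ha, zero_comp]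
      exact key (h (i+1)) _ _ e'
    have := (H.map_distinguished_exact _ (inv_rot_of_distTriang _ (htri (i+1)))).mono_g
      (by exact hz)
    exact this
  have hepi : ∀ i, Epi (H.map (g (i + 1))) := fun i => by
    have hz : H.map ((Triangle.mk (f (i+1)) (g (i+1))
        (h (i+1) ≫ ((shiftFunctorCompIsoId T (-1 : ℤ) (1 : ℤ) (by norm_num)).app X).inv)).rotate.mor₂) = 0 := by
      have e' : H.map (h (i+1)) = 0 := by
        rw [hsq₃, H.map_comp, hψ, zero_comp]
      show H.map (h (i+1) ≫ ((shiftFunctorCompIsoId T (-1 : ℤ) (1 : ℤ) (by norm_num)).app X).inv) = 0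
      rw [H.map_comp, e', zero_comp]
    have := (H.map_distinguished_exact _ (rot_of_distTriang _ (htri (i+1)))).epi_f
      (by exact hz)
    exact this
  -- the retraction Q i : H(Y'_{i+2}) ⟶ H(X⟦-1⟧), with Q i ≫ H(f (i+1)) = H(δ (i+1))
  have hQex : ∀ i : ℕ, ∃ q : H.obj (Y' (i + 2)) ⟶ H.obj (X⟦(-1 : ℤ)⟧),
      q ≫ H.map (f (i + 1)) = H.map (δ (i + 1)) := fun i => by
    haveI := hmono i
    obtain ⟨l, hl⟩ := (hex (i+1)).lift' (H.map (δ (i+1))) (hδg (i+1))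
    exact ⟨l, hl⟩
  choose Q hQ3 using hQex
  have hQ1 : ∀ i, H.map (f (i + 2)) ≫ Q i = 𝟙 _ := fun i => by
    haveI := hmono i
    rw [← cancel_mono (H.map (f (i + 1))), Category.assoc, hQ3, ← H.map_comp, hsq₁,
      Category.id_comp]
  have hQ2 : ∀ i, H.map (δ (i + 2)) ≫ Q i = Q (i + 1) := fun i => by
    haveI := hmono i
    rw [← cancel_mono (H.map (f (i + 1))), Category.assoc, hQ3,
      show H.map (f (i+1)) = H.map (f (i+2)) ≫ H.map (δ (i+1)) by
        rw [← H.map_comp, hsq₁],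
      ← Category.assoc, hQ3 (i+1), ← H.map_comp]
  refine ⟨?_, ?_, ?_⟩
  · -- the splitting
    have hs : ∀ i : ℕ, ∃ s : H.obj (Y (i + 2)) ⟶ H.obj (Y' (i + 2)),
        H.map (g (i + 2)) ≫ s = 𝟙 _ - Q i ≫ H.map (f (i + 2)) := fun i => by
      haveI := hepi (i+1)
      obtain ⟨s, hsdef⟩ := (hex (i+2)).desc' (𝟙 _ - Q i ≫ H.map (f (i + 2)))
        (by rw [Preadditive.comp_sub, Category.comp_id, ← Category.assoc, hQ1,
          Category.id_comp, sub_self])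
      exact ⟨s, hsdef⟩
    choose s hsdef using hs
    have hsg : ∀ i, s i ≫ H.map (g (i + 2)) = 𝟙 _ := fun i => by
      haveI := hepi (i+1)
      rw [← cancel_epi (H.map (g (i + 2))), ← Category.assoc, hsdef,
        Preadditive.sub_comp, Category.id_comp, Category.assoc, hfg, comp_zero,
        sub_zero, Category.comp_id]
    have hsQ : ∀ i, s i ≫ Q i = 0 := fun i => by
      haveI := hepi (i+1)
      rw [← cancel_epi (H.map (g (i + 2))), ← Category.assoc, hsdef,
        Preadditive.sub_comp, Category.id_comp, Category.assoc, hQ1,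
        Category.comp_id, sub_self, comp_zero]
    refine ⟨fun i =>
      { hom := biprod.lift (H.map (g (i + 2))) (Q i)
        inv := biprod.desc (s i) (H.map (f (i + 2)))
        hom_inv_id := by
          rw [biprod.lift_desc, hsdef, sub_add_cancel]
        inv_hom_id := by
          ext
          · simp [hsg]
          · simp [hsQ]
          · simp [hfg]
          · simp [hQ1] }, fun i => ?_⟩
    ext
    · simp [hδg]
    · simp [hQ2]
  · -- the kernel computation
    set P := ∏ᶜ fun i => H.obj (Y' i) with hP
    set L : P ⟶ P := Pi.lift (fun i => Pi.π (fun j => H.obj (Y' j)) (i + 1) ≫ H.map (δ i))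
      with hL
    set d : P ⟶ P := 𝟙 P - L with hd
    have hLπ : ∀ i, L ≫ Pi.π _ i = Pi.π (fun j => H.obj (Y' j)) (i + 1) ≫ H.map (δ i) :=
      fun i => by simp [hL]
    set α : H.obj (X⟦(-1 : ℤ)⟧) ⟶ P := Pi.lift (fun i => H.map (f i)) with hα
    have hαd : α ≫ d = 0 := by
      apply Pi.hom_ext
      intro j
      simp [hd, hα, Preadditive.sub_comp, hLπ, ← H.map_comp, hsq₁]
    set k : kernel d ⟶ P := kernel.ι d with hk
    have hkL : k ≫ L = k := by
      have h0 := kernel.condition d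
      rw [hd, Preadditive.comp_sub, Category.comp_id, sub_eq_zero] at h0
      exact h0.symm
    have hkrec : ∀ j, k ≫ Pi.π _ (j + 1) ≫ H.map (δ j) = k ≫ Pi.π _ j := fun j => by
      conv_rhs => rw [← hkL]
      rw [Category.assoc, hLπ]
    have hA : ∀ i, k ≫ Pi.π _ (i + 2) ≫ Q i = k ≫ Pi.π _ 2 ≫ Q 0 := by
      intro i
      induction i with
      | zero => rfl
      | succ n ih =>
        rw [← hQ2, ← ih]
        have := hkrec (n + 2)
        rw [show k ≫ Pi.π (fun j => H.obj (Y' j)) (n+3) ≫ H.map (δ (n+2)) ≫ Q n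
            = (k ≫ Pi.π (fun j => H.obj (Y' j)) (n+3) ≫ H.map (δ (n+2))) ≫ Q n by
          simp [Category.assoc], this]
        simp [Category.assoc]
    have key : ∀ j, k ≫ Pi.π (fun i => H.obj (Y' i)) 2 ≫ Q 0 ≫ H.map (f j)
        = k ≫ Pi.π _ j := by
      have key' : ∀ j, k ≫ Pi.π (fun i => H.obj (Y' i)) 2 ≫ Q 0 ≫ H.map (f (j + 1))
          = k ≫ Pi.π _ (j + 1) := by
        intro j
        have h1 : k ≫ Pi.π (fun i => H.obj (Y' i)) 2 ≫ Q 0 ≫ H.map (f (j+1))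
            = (k ≫ Pi.π (fun i => H.obj (Y' i)) (j + 2) ≫ Q j) ≫ H.map (f (j+1)) := by
          rw [hA j]; simp [Category.assoc]
        rw [h1, Category.assoc, Category.assoc, hQ3, hkrec]
      intro j
      match j with
      | (j' + 1) => exact key' j'
      | 0 =>
        have : H.map (f 0) = H.map (f 1) ≫ H.map (δ 0) := by rw [← H.map_comp, hsq₁]
        rw [this, show k ≫ Pi.π (fun i => H.obj (Y' i)) 2 ≫ Q 0 ≫ H.map (f 1) ≫ H.map (δ 0)
            = (k ≫ Pi.π (fun i => H.obj (Y' i)) 2 ≫ Q 0 ≫ H.map (f 1)) ≫ H.map (δ 0) by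
          simp [Category.assoc], key' 0, Category.assoc, hkrec]
    exact ⟨{
      hom := k ≫ Pi.π _ 2 ≫ Q 0
      inv := kernel.lift d α hαd
      hom_inv_id := by
        rw [← cancel_mono (kernel.ι d)]
        rw [Category.assoc, Category.assoc, kernel.lift_ι, Category.id_comp]
        apply Pi.hom_ext
        intro j
        rw [Category.assoc, Category.assoc]
        simpa [hα] using key j
      inv_hom_id := by
        rw [show kernel.lift d α hαd ≫ k ≫ Pi.π (fun i => H.obj (Y' i)) 2 ≫ Q 0
            = (kernel.lift d α hαd ≫ kernel.ι d) ≫ Pi.π (fun i => H.obj (Y' i)) 2 ≫ Q 0 by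
          simp [hk, Category.assoc], kernel.lift_ι]
        simp [hα, hQ1 0] }⟩
  · -- the cokernel is zero: d is a split epi
    set P := ∏ᶜ fun i => H.obj (Y' i) with hP
    set L : P ⟶ P := Pi.lift (fun i => Pi.π (fun j => H.obj (Y' j)) (i + 1) ≫ H.map (δ i))
      with hL
    set d : P ⟶ P := 𝟙 P - L with hd
    have hLπ : ∀ i, L ≫ Pi.π _ i = Pi.π (fun j => H.obj (Y' j)) (i + 1) ≫ H.map (δ i) :=
      fun i => by simp [hL]
    -- partial sums
    let w : ℕ → (P ⟶ H.obj (X⟦(-1 : ℤ)⟧)) := fun i => Nat.rec 0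
      (fun n wn => wn - Pi.π (fun j => H.obj (Y' j)) (n + 2) ≫ Q n) i
    have hw0 : w 0 = 0 := rfl
    have hwsucc : ∀ i, w (i + 1) = w i - Pi.π (fun j => H.obj (Y' j)) (i + 2) ≫ Q i :=
      fun i => rfl
    let σc : ∀ i, P ⟶ H.obj (Y' i) := fun i => Nat.rec
      (Pi.π (fun j => H.obj (Y' j)) 0 + Pi.π (fun j => H.obj (Y' j)) 1 ≫ H.map (δ 0))
      (fun n _ => Pi.π (fun j => H.obj (Y' j)) (n + 1) + w n ≫ H.map (f (n + 1))) i
    have hσc0 : σc 0 = Pi.π (fun j => H.obj (Y' j)) 0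
        + Pi.π (fun j => H.obj (Y' j)) 1 ≫ H.map (δ 0) := rfl
    have hσcsucc : ∀ n, σc (n + 1)
        = Pi.π (fun j => H.obj (Y' j)) (n + 1) + w n ≫ H.map (f (n + 1)) := fun n => rfl
    have hσ : Pi.lift σc ≫ d = 𝟙 P := by
      apply Pi.hom_ext
      intro j
      rw [hd, Preadditive.comp_sub, Preadditive.sub_comp, Category.comp_id,
        Category.assoc, hLπ, Pi.lift_π, Category.id_comp]
      show σc j - Pi.lift σc ≫ Pi.π (fun j => H.obj (Y' j)) (j + 1) ≫ H.map (δ j)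
        = Pi.π (fun i => H.obj (Y' i)) j
      rw [show Pi.lift σc ≫ Pi.π (fun j => H.obj (Y' j)) (j + 1) ≫ H.map (δ j)
          = σc (j + 1) ≫ H.map (δ j) by
        rw [← Category.assoc]; congr 1; exact Pi.lift_π _ _]
      match j with
      | 0 =>
        have h1 : σc (0 + 1) = Pi.π (fun j => H.obj (Y' j)) 1
            + w 0 ≫ H.map (f 1) := hσcsucc 0
        rw [hσc0, h1, hw0,
          show Pi.π (fun j => H.obj (Y' j)) (0 + 1) = Pi.π (fun j => H.obj (Y' j)) 1 from rfl]
        simp only [Preadditive.add_comp, zero_comp, add_zero]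
        abel
      | (n + 1) =>
        have h1 : σc (n + 1 + 1) = Pi.π (fun j => H.obj (Y' j)) (n + 2)
            + w (n + 1) ≫ H.map (f (n + 2)) := hσcsucc (n + 1)
        have h2 : H.map (f (n + 2)) ≫ H.map (δ (n + 1)) = H.map (f (n + 1)) := by
          rw [← H.map_comp, hsq₁]
        have h3 : Pi.π (fun j => H.obj (Y' j)) (n + 2) ≫ H.map (δ (n + 1))
            = (Pi.π (fun j => H.obj (Y' j)) (n + 2) ≫ Q n) ≫ H.map (f (n + 1)) := by
          rw [Category.assoc, hQ3]
        rw [hσcsucc n, h1, Preadditive.add_comp, Category.assoc, h2, h3, hwsucc n,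
          Preadditive.sub_comp]
        abel
    haveI : IsSplitEpi d := ⟨⟨⟨Pi.lift σc, hσ⟩⟩⟩
    exact (isZero_zero A).of_iso (cokernel.ofEpi d)
end

section
/- Let T be a triangulated category with products, A an abelian AB4* category, and H : T → A a homological functor preserving products. Given morphisms of triangles as in the cocellular construction with connecting maps ψ_i : Y_{i+1} → Y_i satisfying H(Σ^n ψ_i) = 0 for n = 0, -1, -2 and all i ≥ 0, the canonical map H(Σ^{-1}X) → H(Y^∞) is an isomorphism, where Y^∞ = holim Y^i. -/
open CategoryTheory CategoryTheory.Limits CategoryTheory.Pretriangulated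

universe u v
set_option maxHeartbeats 1000000

section Helpers

variable {T : Type u} [Category.{u} T] [Preadditive T]
    [HasZeroObject T] [HasShift T ℤ] [∀ n : ℤ, (shiftFunctor T n).Additive]
    [Pretriangulated T]
    {A : Type v} [Category.{v} A] [Abelian A]
    (H : T ⥤ A) [H.IsHomological]

lemma aux_mono_mor₁ (Tr : Triangle T) (hTr : Tr ∈ distTriang T)
    (hv : H.map ((Tr.mor₃)⟦(-1 : ℤ)⟧') = 0) : Mono (H.map Tr.mor₁) := by
  have ex := H.map_distinguished_exact _ (inv_rot_of_distTriang Tr hTr)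
  have := ex.mono_g (by
    dsimp [Triangle.invRotate]
    show H.map (-((Tr.mor₃)⟦(-1 : ℤ)⟧' ≫ _)) = 0; erw [Functor.map_neg, Functor.map_comp, hv]; simp)
  exact this

lemma aux_lift (Tr : Triangle T) (hTr : Tr ∈ distTriang T)
    (hm : Mono (H.map Tr.mor₁)) {S : A} (k : S ⟶ H.obj Tr.obj₂)
    (hk : k ≫ H.map Tr.mor₂ = 0) : ∃ l : S ⟶ H.obj Tr.obj₁, l ≫ H.map Tr.mor₁ = k := by
  have ex := H.map_distinguished_exact Tr hTr
  haveI : Mono ((shortComplexOfDistTriangle Tr hTr).map H).f := hm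
  exact ex.lift' k hk

omit [HasZeroObject T] [∀ (n : ℤ), (shiftFunctor T n).Additive] [Pretriangulated T] in
lemma aux_sgn {P Q : T} (m : P ⟶ Q) : (-1 : ℤ).negOnePow • m = -m := by
  have hsgn : (-1 : ℤ).negOnePow = -1 := Int.negOnePow_odd _ ⟨-1, by norm_num⟩
  rw [hsgn, Units.smul_def]
  simp

lemma aux_mono_neg {P Q : A} (m : P ⟶ Q) (hm : Mono (-m)) : Mono m := by
  have : -m = m ≫ (-𝟙 Q) := by simp
  rw [this] at hm
  exact mono_of_mono m (-𝟙 Q)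

lemma aux_neg_mono {P Q : A} (m : P ⟶ Q) (hm : Mono m) : Mono (-m) := by
  have : -m = m ≫ (-𝟙 Q) := by simp
  rw [this]
  exact mono_comp m (-𝟙 Q)

lemma aux_shift_mono (Tr : Triangle T) (hTr : Tr ∈ distTriang T)
    (hv : H.map (((Tr.mor₃)⟦(-1 : ℤ)⟧')⟦(-1 : ℤ)⟧') = 0) :
    Mono (H.map ((Tr.mor₁)⟦(-1 : ℤ)⟧')) := by
  have hm := aux_mono_mor₁ H _ (Triangle.shift_distinguished Tr hTr (-1)) (by
    show H.map (((-1 : ℤ).negOnePow • ((Tr.mor₃)⟦(-1 : ℤ)⟧' ≫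
      (shiftFunctorComm T 1 (-1)).hom.app Tr.obj₁))⟦(-1 : ℤ)⟧') = 0
    rw [aux_sgn]
    simp [hv])
  apply aux_mono_neg
  have : ((CategoryTheory.shiftFunctor (Triangle T) (-1 : ℤ)).obj Tr).mor₁ =
      (-1 : ℤ).negOnePow • (Tr.mor₁)⟦(-1 : ℤ)⟧' := rfl
  erw [this, aux_sgn, Functor.map_neg] at hm
  exact hm

lemma aux_shift_lift (Tr : Triangle T) (hTr : Tr ∈ distTriang T)
    (hm : Mono (H.map ((Tr.mor₁)⟦(-1 : ℤ)⟧'))) {S : A}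
    (k : S ⟶ H.obj ((Tr.obj₂)⟦(-1 : ℤ)⟧))
    (hk : k ≫ H.map ((Tr.mor₂)⟦(-1 : ℤ)⟧') = 0) :
    ∃ l : S ⟶ H.obj ((Tr.obj₁)⟦(-1 : ℤ)⟧), l ≫ H.map ((Tr.mor₁)⟦(-1 : ℤ)⟧') = k := by
  have e₁ : ((CategoryTheory.shiftFunctor (Triangle T) (-1 : ℤ)).obj Tr).mor₁ =
      (-1 : ℤ).negOnePow • (Tr.mor₁)⟦(-1 : ℤ)⟧' := rfl
  have e₂ : ((CategoryTheory.shiftFunctor (Triangle T) (-1 : ℤ)).obj Tr).mor₂ =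
      (-1 : ℤ).negOnePow • (Tr.mor₂)⟦(-1 : ℤ)⟧' := rfl
  have hm' : Mono (H.map (((CategoryTheory.shiftFunctor (Triangle T) (-1 : ℤ)).obj Tr).mor₁)) := by
    erw [e₁, aux_sgn, Functor.map_neg]
    exact aux_neg_mono _ hm
  obtain ⟨l, hl⟩ := aux_lift H _ (Triangle.shift_distinguished Tr hTr (-1)) hm'
    (S := S) k (by erw [e₂, aux_sgn, Functor.map_neg, Preadditive.comp_neg, hk, neg_zero])
  refine ⟨-l, ?_⟩
  erw [e₁, aux_sgn, Functor.map_neg] at hl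
  erw [Preadditive.neg_comp, ← Preadditive.comp_neg]
  exact hl

end Helpers

lemma aux_epi_conj {A : Type v} [Category.{v} A] {P Q P' Q' : A}
    (i₁ : P ⟶ P') (i₂ : Q ⟶ Q') [IsIso i₁] [IsIso i₂] (a : P ⟶ Q) (b : P' ⟶ Q')
    (hcomm : a ≫ i₂ = i₁ ≫ b) (hb : Epi b) : Epi a := by
  have ha : a = i₁ ≫ b ≫ inv i₂ := by
    rw [← Category.assoc, ← hcomm, Category.assoc, IsIso.hom_inv_id, Category.comp_id]
  rw [ha]
  exact epi_comp _ _

lemma aux_epi_one_sub {A : Type v} [Category.{v} A] [Abelian A] [HasProducts.{0} A]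
    (B : ℕ → A) (P : A) (u : ∀ j, P ⟶ B j) (d : ∀ j, B (j + 1) ⟶ B j)
    (hud : ∀ j, u (j + 1) ≫ d j = u j)
    (ε : ∀ j, B (j + 2) ⟶ P) (hε : ∀ j, ε j ≫ u (j + 1) = d (j + 1)) :
    Epi (𝟙 (∏ᶜ B) - Pi.lift (fun j => Pi.π B (j + 1) ≫ d j)) := by
  set τ : (∏ᶜ B : A) ⟶ ∏ᶜ B := 𝟙 (∏ᶜ B) - Pi.lift (fun j => Pi.π B (j + 1) ≫ d j) with hτ
  set σ : (∏ᶜ B : A) ⟶ ∏ᶜ B := Pi.lift (fun j => Pi.π B j + Pi.π B (j + 1) ≫ d j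
    - (∑ k ∈ Finset.range j, Pi.π B (k + 2) ≫ ε k) ≫ u j) with hσ
  have hστ : σ ≫ τ = 𝟙 _ := by
    apply Pi.hom_ext
    intro j
    have e1 : σ ≫ Pi.π B j = Pi.π B j + Pi.π B (j + 1) ≫ d j
        - (∑ k ∈ Finset.range j, Pi.π B (k + 2) ≫ ε k) ≫ u j := by
      simp [hσ]
    have e2 : σ ≫ Pi.π B (j + 1) = Pi.π B (j + 1) + Pi.π B (j + 2) ≫ d (j + 1)
        - (∑ k ∈ Finset.range (j + 1), Pi.π B (k + 2) ≫ ε k) ≫ u (j + 1) := by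
      simp [hσ]
    have e3 : (σ ≫ τ) ≫ Pi.π B j = σ ≫ Pi.π B j - (σ ≫ Pi.π B (j + 1)) ≫ d j := by
      simp [hτ, Preadditive.comp_sub, Preadditive.sub_comp]
    rw [e3, e1, e2]
    rw [Finset.sum_range_succ]
    simp only [Preadditive.sub_comp, Preadditive.add_comp, Category.assoc, hud,
      Category.id_comp]
    rw [show d (j + 1) ≫ d j = ε j ≫ u j by rw [← hε j, Category.assoc, hud]]
    abel
  have : Epi (σ ≫ τ) := by rw [hστ]; infer_instance
  exact epi_of_epi σ τ

lemma aux_partA {T : Type u} [Category.{u} T] [Preadditive T]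
    [HasZeroObject T] [HasShift T ℤ] [∀ n : ℤ, (shiftFunctor T n).Additive]
    [Pretriangulated T] [HasProducts.{0} T]
    {A : Type v} [Category.{v} A] [Abelian A] [HasProducts.{0} A]
    (H : T ⥤ A) [H.IsHomological] [∀ ι : Type, PreservesLimitsOfShape (Discrete ι) H]
    (Y' : ℕ → T) (δ : ∀ i, Y' (i + 1) ⟶ Y' i)
    (hepi0 : Epi (𝟙 (∏ᶜ (fun i => H.obj ((Y' i)⟦(-1 : ℤ)⟧))) -
      Pi.lift (fun j => Pi.π (fun i => H.obj ((Y' i)⟦(-1 : ℤ)⟧)) (j + 1) ≫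
        H.map ((δ j)⟦(-1 : ℤ)⟧')))) :
    Epi (H.map ((𝟙 (∏ᶜ Y') - Pi.lift (fun i => Pi.π Y' (i + 1) ≫ δ i))⟦(-1 : ℤ)⟧')) := by
  have hcomm2 : H.map (𝟙 (∏ᶜ (fun i => (Y' i)⟦(-1 : ℤ)⟧)) -
        Pi.lift (fun i => Pi.π (fun i => (Y' i)⟦(-1 : ℤ)⟧) (i + 1) ≫ (δ i)⟦(-1 : ℤ)⟧')) ≫
        piComparison H (fun i => (Y' i)⟦(-1 : ℤ)⟧) =
      piComparison H (fun i => (Y' i)⟦(-1 : ℤ)⟧) ≫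
        (𝟙 (∏ᶜ (fun i => H.obj ((Y' i)⟦(-1 : ℤ)⟧))) -
          Pi.lift (fun j => Pi.π (fun i => H.obj ((Y' i)⟦(-1 : ℤ)⟧)) (j + 1) ≫
            H.map ((δ j)⟦(-1 : ℤ)⟧'))) := by
    apply Pi.hom_ext
    intro j
    simp only [Category.assoc, piComparison_comp_π, piComparison_comp_π_assoc, Preadditive.comp_sub,
      Preadditive.sub_comp, Category.comp_id, Category.id_comp, Functor.map_sub,
      CategoryTheory.Functor.map_id, limit.lift_π, Fan.mk_π_app, ← H.map_comp]
  have hcomm1 : (𝟙 (∏ᶜ Y') - Pi.lift (fun i => Pi.π Y' (i + 1) ≫ δ i))⟦(-1 : ℤ)⟧' ≫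
        piComparison (shiftFunctor T (-1 : ℤ)) Y' =
      piComparison (shiftFunctor T (-1 : ℤ)) Y' ≫
        (𝟙 (∏ᶜ (fun i => (Y' i)⟦(-1 : ℤ)⟧)) -
          Pi.lift (fun i => Pi.π (fun i => (Y' i)⟦(-1 : ℤ)⟧) (i + 1) ≫ (δ i)⟦(-1 : ℤ)⟧')) := by
    apply Pi.hom_ext
    intro j
    simp only [Category.assoc, piComparison_comp_π, piComparison_comp_π_assoc, Preadditive.comp_sub,
      Preadditive.sub_comp, Category.comp_id, Category.id_comp, Functor.map_sub,
      CategoryTheory.Functor.map_id, limit.lift_π, Fan.mk_π_app, ← Functor.map_comp]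
  have hepi1 : Epi (H.map (𝟙 (∏ᶜ (fun i => (Y' i)⟦(-1 : ℤ)⟧)) -
      Pi.lift (fun i => Pi.π (fun i => (Y' i)⟦(-1 : ℤ)⟧) (i + 1) ≫ (δ i)⟦(-1 : ℤ)⟧'))) :=
    aux_epi_conj _ _ _ _ hcomm2 hepi0
  have hcomm1H := congrArg H.map hcomm1
  rw [H.map_comp, H.map_comp] at hcomm1H
  exact aux_epi_conj _ _ _ _ hcomm1H hepi1


/-- with notation as in the cocellular construction, if `H : T ⥤ A` is a
product-preserving homological functor into an abelian AB4* category and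
`H(Σⁿψ_i) = 0` for `n = 0, -1, -2` and all `i`, then the canonical map
`H(Σ⁻¹X) → H(Y^∞)` is an isomorphism, where `Y^∞ = holim Y^i`. -/
theorem holim_iso_of_cophantom {T : Type u} [Category.{u} T] [Preadditive T]
    [HasZeroObject T] [HasShift T ℤ] [∀ n : ℤ, (shiftFunctor T n).Additive]
    [Pretriangulated T] [HasProducts.{0} T]
    {A : Type v} [Category.{v} A] [Abelian A] [HasProducts.{0} A]
    (H : T ⥤ A) [H.IsHomological] [∀ ι : Type, PreservesLimitsOfShape (Discrete ι) H]
    (X : T) (Y' Y : ℕ → T)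
    (f : ∀ i, (X⟦(-1 : ℤ)⟧ : T) ⟶ Y' i) (g : ∀ i, Y' i ⟶ Y i) (h : ∀ i, Y i ⟶ X)
    (δ : ∀ i, Y' (i + 1) ⟶ Y' i) (ψ : ∀ i, Y (i + 1) ⟶ Y i)
    (htri : ∀ i, Triangle.mk (f i) (g i)
      (h i ≫ ((shiftFunctorCompIsoId T (-1 : ℤ) (1 : ℤ) (by norm_num)).app X).inv)
        ∈ distTriang T)
    (hsq₁ : ∀ i, f (i + 1) ≫ δ i = f i)
    (hsq₂ : ∀ i, g (i + 1) ≫ ψ i = δ i ≫ g i)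
    (hsq₃ : ∀ i, h (i + 1) = ψ i ≫ h i)
    (hψ₀ : ∀ i, H.map (ψ i) = 0)
    (hψ₁ : ∀ i, H.map ((ψ i)⟦(-1 : ℤ)⟧') = 0)
    (hψ₂ : ∀ i, H.map ((ψ i)⟦(-2 : ℤ)⟧') = 0)
    -- the homotopy limit `Y^∞` of the tower `(Y'_i, δ_i)`:
    (Yinf : T) (p : Yinf ⟶ ∏ᶜ Y') (q : (∏ᶜ Y' : T) ⟶ Yinf⟦(1 : ℤ)⟧)
    (hholim : Triangle.mk p
      (𝟙 (∏ᶜ Y') - Pi.lift (fun i => Pi.π Y' (i + 1) ≫ δ i)) q ∈ distTriang T)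
    -- the canonical map `Σ⁻¹X → Y^∞` induced by the compatible maps `f i`:
    (c : (X⟦(-1 : ℤ)⟧ : T) ⟶ Yinf) (hc : ∀ i, c ≫ p ≫ Pi.π Y' i = f i) :
    IsIso (H.map c) := by
  -- Step 0 : double-shift vanishing of ψ
  have hsum : (-1 : ℤ) + -1 = -2 := by norm_num
  have hψdd : ∀ i, H.map (((ψ i)⟦(-1 : ℤ)⟧')⟦(-1 : ℤ)⟧') = 0 := by
    intro i
    have hnat := (shiftFunctorAdd' T (-1) (-1) (-2) hsum).hom.naturality (ψ i)
    have e2 : ((ψ i)⟦(-1 : ℤ)⟧')⟦(-1 : ℤ)⟧' =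
        (shiftFunctorAdd' T (-1) (-1) (-2) hsum).inv.app (Y (i + 1)) ≫
        (ψ i)⟦(-2 : ℤ)⟧' ≫ (shiftFunctorAdd' T (-1) (-1) (-2) hsum).hom.app (Y i) := by
      symm
      rw [hnat, ← Category.assoc, Iso.inv_hom_id_app, Category.id_comp]
      rfl
    rw [e2, H.map_comp, H.map_comp, hψ₂ i, zero_comp, comp_zero]
  -- mono facts
  have monoF : ∀ j, Mono (H.map (f (j + 1))) := by
    intro j
    apply aux_mono_mor₁ H _ (htri (j + 1))
    show H.map ((h (j + 1) ≫ _)⟦(-1 : ℤ)⟧') = 0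
    rw [hsq₃ j]
    erw [Functor.map_comp, Functor.map_comp, Functor.map_comp, Functor.map_comp, hψ₁ j]; simp
  have monoF' : ∀ j, Mono (H.map ((f (j + 1))⟦(-1 : ℤ)⟧')) := by
    intro j
    apply aux_shift_mono H _ (htri (j + 1))
    show H.map (((h (j + 1) ≫ _)⟦(-1 : ℤ)⟧')⟦(-1 : ℤ)⟧') = 0
    rw [hsq₃ j]
    erw [Functor.map_comp, Functor.map_comp, Functor.map_comp, Functor.map_comp, Functor.map_comp, Functor.map_comp, hψdd j]; simp
  -- abbreviation for the shift map
  set s : (∏ᶜ Y' : T) ⟶ ∏ᶜ Y' := Pi.lift (fun i => Pi.π Y' (i + 1) ≫ δ i) with hs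
  -- Part A : Mono (H.map p)
  have hepi_sh : Epi (H.map ((𝟙 (∏ᶜ Y') - s)⟦(-1 : ℤ)⟧')) := by
    have hfac : ∀ j, ∃ l : H.obj ((Y' (j + 2))⟦(-1 : ℤ)⟧) ⟶
        H.obj ((X⟦(-1 : ℤ)⟧ : T)⟦(-1 : ℤ)⟧),
        l ≫ H.map ((f (j + 1))⟦(-1 : ℤ)⟧') = H.map ((δ (j + 1))⟦(-1 : ℤ)⟧') := by
      intro j
      apply aux_shift_lift H _ (htri (j + 1)) (monoF' j)
      show H.map ((δ (j + 1))⟦(-1 : ℤ)⟧') ≫ H.map ((g (j + 1))⟦(-1 : ℤ)⟧') = 0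
      rw [← H.map_comp, ← Functor.map_comp, ← hsq₂ (j + 1), Functor.map_comp, H.map_comp,
        hψ₁ (j + 1), comp_zero]
    choose ε hε using hfac
    have hepi0 : Epi (𝟙 (∏ᶜ (fun i => H.obj ((Y' i)⟦(-1 : ℤ)⟧))) -
        Pi.lift (fun j => Pi.π (fun i => H.obj ((Y' i)⟦(-1 : ℤ)⟧)) (j + 1) ≫
          H.map ((δ j)⟦(-1 : ℤ)⟧'))) :=
      aux_epi_one_sub (fun i => H.obj ((Y' i)⟦(-1 : ℤ)⟧))
        (H.obj ((X⟦(-1 : ℤ)⟧ : T)⟦(-1 : ℤ)⟧))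
        (fun j => H.map ((f j)⟦(-1 : ℤ)⟧')) (fun j => H.map ((δ j)⟦(-1 : ℤ)⟧'))
        (fun j => by rw [← H.map_comp, ← Functor.map_comp, hsq₁ j]) ε hε
    exact aux_partA H Y' δ hepi0
  have h23 : (𝟙 (∏ᶜ Y') - s) ≫ q = 0 := comp_distTriang_mor_zero₂₃ _ hholim
  have hq0 : H.map ((q)⟦(-1 : ℤ)⟧') = 0 := by
    haveI := hepi_sh
    rw [← cancel_epi (H.map ((𝟙 (∏ᶜ Y') - s)⟦(-1 : ℤ)⟧')), comp_zero,
      ← H.map_comp, ← Functor.map_comp, h23]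
    simp
  have monoP : Mono (H.map p) := by
    have ex := H.map_distinguished_exact _ (inv_rot_of_distTriang _ hholim)
    have := ex.mono_g (by
      dsimp [Triangle.invRotate]
      show H.map (-((q)⟦(-1 : ℤ)⟧' ≫ _)) = 0; erw [Functor.map_neg, Functor.map_comp, hq0]; simp)
    exact this
  -- Part B : Mono (H.map c)
  have monoC : Mono (H.map c) := by
    have h1 : H.map c ≫ H.map (p ≫ Pi.π Y' 1) = H.map (f 1) := by
      rw [← H.map_comp, hc 1]
    have : Mono (H.map c ≫ H.map (p ≫ Pi.π Y' 1)) := by rw [h1]; exact monoF 0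
    exact mono_of_mono (H.map c) (H.map (p ≫ Pi.π Y' 1))
  -- Part C : Epi (H.map c)
  set t : H.obj (∏ᶜ Y') ⟶ H.obj (∏ᶜ Y') := H.map (𝟙 (∏ᶜ Y') - s) with ht
  have ex_mid := H.map_distinguished_exact _ hholim
  haveI hmono_mid : Mono ((shortComplexOfDistTriangle _ hholim).map H).f := monoP
  set b : (kernel t : A) ⟶ H.obj (∏ᶜ Y') := kernel.ι t with hbdef
  have hb : b ≫ t = 0 := kernel.condition t
  obtain ⟨l, hl⟩ := ex_mid.lift' (A := kernel t) b hb
  have hl' : l ≫ H.map p = b := hl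
  have hpt : H.map p ≫ t = 0 := by
    have hz12 : p ≫ (𝟙 (∏ᶜ Y') - s) = 0 := comp_distTriang_mor_zero₁₂ _ hholim
    rw [ht, ← H.map_comp, hz12, H.map_zero]
  have hl₂b : kernel.lift t (H.map p) hpt ≫ b = H.map p := kernel.lift_ι t (H.map p) hpt
  have hsplit : kernel.lift t (H.map p) hpt ≫ l = 𝟙 _ := by
    haveI := monoP
    erw [← cancel_mono (H.map p), Category.assoc, hl', hl₂b, Category.id_comp]
  have hepil : Epi l := by
    have hse : IsSplitEpi l := ⟨⟨⟨kernel.lift t (H.map p) hpt, hsplit⟩⟩⟩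
    exact hse.epi
  set β : ∀ i, (kernel t : A) ⟶ H.obj (Y' i) := fun i => b ≫ H.map (Pi.π Y' i) with hβ
  have hbs : b ≫ H.map s = b := by
    have h0 : b ≫ (𝟙 (H.obj (∏ᶜ Y')) - H.map s) = 0 := by
      rw [show 𝟙 (H.obj (∏ᶜ Y')) - H.map s = t from by
        rw [ht, Functor.map_sub, CategoryTheory.Functor.map_id]]
      exact hb
    rw [Preadditive.comp_sub, Category.comp_id, sub_eq_zero] at h0
    exact h0.symm
  have claim0 : ∀ i, β i = β (i + 1) ≫ H.map (δ i) := by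
    intro i
    simp only [hβ]
    calc b ≫ H.map (Pi.π Y' i) = (b ≫ H.map s) ≫ H.map (Pi.π Y' i) := by rw [hbs]
    _ = b ≫ H.map (s ≫ Pi.π Y' i) := by rw [Category.assoc, H.map_comp]
    _ = b ≫ H.map (Pi.π Y' (i + 1) ≫ δ i) := by rw [hs, limit.lift_π]; rfl
    _ = (b ≫ H.map (Pi.π Y' (i + 1))) ≫ H.map (δ i) := by rw [H.map_comp, Category.assoc]
  have hβg : ∀ i, β (i + 1) ≫ H.map (g (i + 1)) = 0 := by
    intro i
    rw [claim0 (i + 1), Category.assoc, ← H.map_comp, ← hsq₂ (i + 1), H.map_comp,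
      hψ₀ (i + 1), comp_zero, comp_zero]
  obtain ⟨x, hx0⟩ := aux_lift H _ (htri 1) (monoF 0) (β 1) (hβg 0)
  have hx1 : x ≫ H.map (f 1) = β 1 := hx0
  have key : ∀ i, x ≫ H.map (f (i + 1)) = β (i + 1) := by
    intro i
    induction i with
    | zero => exact hx1
    | succ n ih =>
      have hz : f (n + 2) ≫ g (n + 2) = 0 := comp_distTriang_mor_zero₁₂ _ (htri (n + 2))
      have hρg : (β (n + 2) - x ≫ H.map (f (n + 2))) ≫ H.map (g (n + 2)) = 0 := by
        erw [Preadditive.sub_comp, hβg (n + 1), Category.assoc, ← H.map_comp, hz,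
          H.map_zero, comp_zero, zero_sub, neg_zero]
      obtain ⟨y, hy'⟩ := aux_lift H _ (htri (n + 2)) (monoF (n + 1)) _ hρg
      have hy : y ≫ H.map (f (n + 2)) = β (n + 2) - x ≫ H.map (f (n + 2)) := hy'
      have e1 : H.map (f (n + 2)) ≫ H.map (δ (n + 1)) = H.map (f (n + 1)) := by
        rw [← H.map_comp, hsq₁ (n + 1)]
      have hyd : y ≫ H.map (f (n + 1)) = 0 := by
        have h2 : y ≫ H.map (f (n + 2)) ≫ H.map (δ (n + 1)) =
            (β (n + 2) - x ≫ H.map (f (n + 2))) ≫ H.map (δ (n + 1)) := by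
          rw [← Category.assoc, hy]
        erw [e1] at h2
        erw [h2, Preadditive.sub_comp, ← claim0 (n + 1), Category.assoc, e1, ih, sub_self]
      have hy0 : y = 0 := by
        haveI := monoF n
        erw [← cancel_mono (H.map (f (n + 1))), hyd, zero_comp]
      rw [hy0, zero_comp] at hy
      exact (sub_eq_zero.mp hy.symm).symm
  have key' : ∀ i, x ≫ H.map (f i) = β i := by
    intro i
    cases i with
    | zero =>
      have e1 : H.map (f 1) ≫ H.map (δ 0) = H.map (f 0) := by rw [← H.map_comp, hsq₁ 0]
      erw [← e1, ← Category.assoc, key 0, ← claim0 0]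
    | succ n => exact key n
  have hxl : x ≫ H.map c = l := by
    haveI := monoP
    erw [← cancel_mono (H.map p), Category.assoc, hl']
    haveI : IsIso (piComparison H Y') := inferInstance
    rw [← cancel_mono (piComparison H Y')]
    apply Pi.hom_ext
    intro j
    erw [Category.assoc, Category.assoc, Category.assoc, piComparison_comp_π,
      ← H.map_comp, ← H.map_comp, hc j, Category.assoc, piComparison_comp_π]
    exact key' j
  have hepiC : Epi (H.map c) := by
    have : Epi (x ≫ H.map c) := by rw [hxl]; exact hepil
    exact epi_of_epi x (H.map c)
  haveI := monoC
  haveI := hepiC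
  exact isIso_of_mono_of_epi _
end

section
/- Let T be a triangulated category with products and let C be a set of 0-cocompact objects of T. Then every object C of C is weak cocompact with respect to any inverse tower whose connecting maps are (C ∪ ΣC)-cophantoms; that is, if Y_0 ← Y_1 ← Y_2 ← ⋯ has all connecting maps ψ_i with T(ψ_i, C') = 0 for all C' in C ∪ ΣC, then T(holim Y_i, C) = 0. -/
open CategoryTheory CategoryTheory.Limits CategoryTheory.Pretriangulated

universe u

variable {T : Type u} [Category.{u} T] [Preadditive T] [HasZeroObject T]
  [HasShift T ℤ] [∀ n : ℤ, (shiftFunctor T n).Additive] [Pretriangulated T]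
  [HasProducts.{0} T]

/-- Composition `X (i+k) ⟶ X i` of `k` consecutive connecting maps of an inverse
tower. -/
def seqComp (X : ℕ → T) (ξ : ∀ i, X (i + 1) ⟶ X i) (i : ℕ) : ∀ k, X (i + k) ⟶ X i
  | 0 => 𝟙 _
  | k + 1 => ξ (i + k) ≫ seqComp X ξ i k

/-- An object `c` of `T` is 0-cocompact: for every inverse tower `(X_i, ξ_i)` such
that the direct tower `T(X_i, Σc)` is co-Mittag-Leffler and `colim T(X_i, c) = 0`,
every map from a homotopy limit of the tower to `c` vanishes. -/
def ZeroCocompact (c : T) : Prop :=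
  ∀ (X : ℕ → T) (ξ : ∀ i, X (i + 1) ⟶ X i),
    -- the direct tower `T(X_0, Σc) → T(X_1, Σc) → ⋯` is co-Mittag-Leffler
    (∀ i, ∃ N, ∀ k, N ≤ k → ∀ g : X i ⟶ (c⟦(1 : ℤ)⟧ : T),
      (seqComp X ξ i k ≫ g = 0 ↔ seqComp X ξ i N ≫ g = 0)) →
    -- `colim T(X_i, c) = 0`
    (∀ i, ∀ g : X i ⟶ c, ∃ k, seqComp X ξ i k ≫ g = 0) →
    -- then every map `holim X_i ⟶ c` is zero
    ∀ (L : T) (p : L ⟶ ∏ᶜ X) (q : (∏ᶜ X : T) ⟶ L⟦(1 : ℤ)⟧),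
      (Triangle.mk p (𝟙 (∏ᶜ X) - Pi.lift (fun i => Pi.π X (i + 1) ≫ ξ i)) q
        ∈ distTriang T) →
      ∀ f : L ⟶ c, f = 0

/- If every `ψ i` is a `d`-cophantom, every composite of at least one connecting map kills
`T(-, d)`: the direct tower `T(Y_i, d)` is then co-Mittag-Leffler (its kernels are already
stable after one step) and has zero colimit. For `d = c` and `d = Σc` these are exactly the
hypotheses of 0-cocompactness of `c`. -/

section Cophantom

variable {𝒯 : Type u} [Category.{u} 𝒯] [HasZeroMorphisms 𝒯]
  {Y : ℕ → 𝒯} {ψ : ∀ i, Y (i + 1) ⟶ Y i} {d : 𝒯}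

theorem seqComp_succ_comp_eq_zero {i k : ℕ} (hψ : ∀ g : Y (i + k) ⟶ d, ψ (i + k) ≫ g = 0)
    (g : Y i ⟶ d) : seqComp Y ψ i (k + 1) ≫ g = 0 := by
  rw [seqComp, Category.assoc]
  exact hψ _

theorem coMittagLeffler_of_cophantom (hψ : ∀ i, ∀ g : Y i ⟶ d, ψ i ≫ g = 0) (i : ℕ) :
    ∃ N, ∀ k, N ≤ k → ∀ g : Y i ⟶ d, (seqComp Y ψ i k ≫ g = 0 ↔ seqComp Y ψ i N ≫ g = 0) := by
  refine ⟨1, fun k hk g => ?_⟩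
  obtain ⟨m, rfl⟩ := Nat.exists_eq_add_of_le' hk
  simp only [seqComp_succ_comp_eq_zero (hψ _)]

theorem exists_seqComp_comp_eq_zero_of_cophantom (hψ : ∀ i, ∀ g : Y i ⟶ d, ψ i ≫ g = 0)
    (i : ℕ) (g : Y i ⟶ d) : ∃ k, seqComp Y ψ i k ≫ g = 0 :=
  ⟨1, seqComp_succ_comp_eq_zero (k := 0) (hψ _) g⟩

end Cophantom

/-- objects of a set `C` of 0-cocompact objects are weak cocompact with
respect to any inverse tower whose connecting maps are `(C ∪ ΣC)`-cophantoms. -/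
theorem zeroCocompact_weak_cocompact (C : Set T) (hC : ∀ c ∈ C, ZeroCocompact c) :
    ∀ c ∈ C, ∀ (Y : ℕ → T) (ψ : ∀ i, Y (i + 1) ⟶ Y i),
      (∀ i, ∀ c' ∈ C, (∀ g : Y i ⟶ c', ψ i ≫ g = 0) ∧
        (∀ g : Y i ⟶ (c'⟦(1 : ℤ)⟧ : T), ψ i ≫ g = 0)) →
      ∀ (L : T) (p : L ⟶ ∏ᶜ Y) (q : (∏ᶜ Y : T) ⟶ L⟦(1 : ℤ)⟧),
        (Triangle.mk p (𝟙 (∏ᶜ Y) - Pi.lift (fun i => Pi.π Y (i + 1) ≫ ψ i)) q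
          ∈ distTriang T) →
        ∀ f : L ⟶ c, f = 0 := by
  intro c hc Y ψ hψ
  exact hC c hc Y ψ
    (coMittagLeffler_of_cophantom fun i => (hψ i c hc).2)
    (exists_seqComp_comp_eq_zero_of_cophantom fun i => (hψ i c hc).1)
end

section
/- Let T be a triangulated category with coproducts and G a perfect set of objects of T. Then every G in G is weak compact with respect to any direct tower whose connecting maps are (Σ^{-1}G ∪ G)-phantoms: if Z_0 → Z_1 → Z_2 → ⋯ has all connecting maps φ_i satisfying T(G', φ_i) = 0 for all G' in Σ^{-1}G ∪ G, then T(G, hocolim Z_i) = 0. -/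
/-!
Write `d : ∐ Z ⟶ ∐ Z` for the shift map of the tower, so that `hocolim Z` is the cone of `1 - d`.
Perfectness says precisely that `G`-phantoms are closed under coproducts: a `G`-phantom
`f : X ⟶ Y` has a fibre `W ⟶ X` through which every map from `G` factors, perfectness
transports this to `∐ W ⟶ ∐ X`, and `∐ W ⟶ ∐ X ⟶ ∐ Y` vanishes. Hence `d` is a `G`-phantom, and
so is `Σ d`, because `Σ` commutes with coproducts and turns `Σ⁻¹G`-phantoms into `G`-phantoms.
On `T(g, -)` the maps `1 - d` and `1 - Σ d` are therefore the identity, and exactness of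
`T(g, ∐ Z) → T(g, hocolim Z) → T(g, Σ ∐ Z)` forces `T(g, hocolim Z) = 0`.
-/

open CategoryTheory CategoryTheory.Limits CategoryTheory.Pretriangulated

universe u

variable {T : Type u} [Category.{u} T] [Preadditive T] [HasZeroObject T]
  [HasShift T ℤ] [∀ n : ℤ, (shiftFunctor T n).Additive] [Pretriangulated T]
  [HasCoproducts.{u} T] [HasCoproducts.{0} T]

/-- A set `G` of objects is perfect: whenever a family of maps `X_i ⟶ Y_i` induces
surjections `T(g, X_i) → T(g, Y_i)` for all `g ∈ G`, the induced map on coproducts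
`T(g, ∐X_i) → T(g, ∐Y_i)` is surjective for all `g ∈ G`. -/
def IsPerfect (G : Set T) : Prop :=
  ∀ (ι : Type u) (X Y : ι → T) (f : ∀ i, X i ⟶ Y i),
    (∀ g ∈ G, ∀ i, ∀ a : g ⟶ Y i, ∃ b : g ⟶ X i, b ≫ f i = a) →
    ∀ g ∈ G, ∀ a : g ⟶ ∐ Y, ∃ b : g ⟶ ∐ X, b ≫ Limits.Sigma.map f = a

section Phantom

variable {C : Type*} [Category C] [HasZeroMorphisms C]

def IsPhantom (G : Set C) {X Y : C} (f : X ⟶ Y) : Prop :=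
  ∀ g ∈ G, ∀ a : g ⟶ X, a ≫ f = 0

variable {G : Set C} {X Y : C} {f : X ⟶ Y}

lemma IsPhantom.comp_left (hf : IsPhantom G f) {W : C} (u : W ⟶ X) :
    IsPhantom G (u ≫ f) :=
  fun g hg a => by rw [← Category.assoc]; exact hf g hg _

lemma IsPhantom.comp_right (hf : IsPhantom G f) {Z : C} (k : Y ⟶ Z) :
    IsPhantom G (f ≫ k) :=
  fun g hg a => by rw [← Category.assoc, hf g hg a, zero_comp]

lemma IsPhantom.shift [HasShift C ℤ] (n : ℤ)
    (hf : IsPhantom ((shiftFunctor C (-n)).obj '' G) f) : IsPhantom G (f⟦n⟧') := by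
  intro g hg a
  let adj := (shiftEquiv' C (-n) n (neg_add_cancel n)).toAdjunction
  obtain ⟨b, rfl⟩ := (adj.homEquiv g X).surjective a
  have hb : b ≫ f = 0 := hf _ ⟨g, hg, rfl⟩ b
  have := adj.homEquiv_naturality_right b f
  simp only [hb, Adjunction.homEquiv_unit, Functor.map_zero, comp_zero] at this
  exact this.symm

end Phantom

lemma IsPhantom.eq_zero_of_distTriang_id_sub {C : Type*} [Category C] [Preadditive C]
    [HasZeroObject C] [HasShift C ℤ] [∀ n : ℤ, (shiftFunctor C n).Additive] [Pretriangulated C]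
    {G : Set C} {X L : C} {d : X ⟶ X} (hd : IsPhantom G d) (hd₁ : IsPhantom G (d⟦(1 : ℤ)⟧'))
    {p : X ⟶ L} {q : L ⟶ X⟦(1 : ℤ)⟧} (hT : Triangle.mk (𝟙 X - d) p q ∈ distTriang C)
    {g : C} (hg : g ∈ G) (a : g ⟶ L) : a = 0 := by
  have hq : a ≫ q = 0 := by
    have h : a ≫ q ≫ (𝟙 X - d)⟦(1 : ℤ)⟧' = 0 := by
      rw [show q ≫ (𝟙 X - d)⟦(1 : ℤ)⟧' = 0 from comp_distTriang_mor_zero₃₁ _ hT, comp_zero]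
    rwa [Functor.map_sub, CategoryTheory.Functor.map_id, Preadditive.comp_sub,
      Preadditive.comp_sub, Category.comp_id, ← Category.assoc, hd₁ g hg, sub_zero] at h
  obtain ⟨(b : g ⟶ X), rfl⟩ := Triangle.coyoneda_exact₃ _ hT a hq
  have h : b ≫ (𝟙 X - d) ≫ p = 0 := by
    rw [show (𝟙 X - d) ≫ p = 0 from comp_distTriang_mor_zero₁₂ _ hT, comp_zero]
  rwa [← Category.assoc, Preadditive.comp_sub, Category.comp_id, hd g hg, sub_zero] at h

lemma IsPerfect.isPhantom_sigmaMap {G : Set T} (hG : IsPerfect G) {ι : Type u} {X Y : ι → T}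
    (f : ∀ i, X i ⟶ Y i) (hf : ∀ i, IsPhantom G (f i)) : IsPhantom G (Limits.Sigma.map f) := by
  choose W w δ hW using fun i => distinguished_cocone_triangle₁ (f i)
  have hw : ∀ g ∈ G, ∀ i, ∀ a : g ⟶ X i, ∃ b : g ⟶ W i, b ≫ w i = a := fun g hg i a => by
    obtain ⟨b, hb⟩ := Triangle.coyoneda_exact₂ _ (hW i) a (hf i g hg a)
    exact ⟨b, hb.symm⟩
  intro g hg a
  obtain ⟨b, rfl⟩ := hG ι W X w hw g hg a
  have hcomp : Limits.Sigma.map w ≫ Limits.Sigma.map f = 0 := by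
    ext i
    have hwf : w i ≫ f i = 0 := comp_distTriang_mor_zero₁₂ _ (hW i)
    simp [reassoc_of% hwf]
  rw [Category.assoc, hcomp, comp_zero]

lemma IsPerfect.isPhantom_sigmaMap_of_small {G : Set T} (hG : IsPerfect G) {ι : Type*}
    [Small.{u} ι] {X Y : ι → T} [HasCoproduct X] [HasCoproduct Y]
    (f : ∀ i, X i ⟶ Y i) (hf : ∀ i, IsPhantom G (f i)) : IsPhantom G (Limits.Sigma.map f) := by
  let e := (equivShrink ι).symm
  have he : (Sigma.reindex e X).hom ≫ Limits.Sigma.map f =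
      Limits.Sigma.map (g := Y ∘ e) (fun j => f (e j)) ≫ (Sigma.reindex e Y).hom := by
    ext
    simp
  rw [(Iso.eq_inv_comp _).mpr he]
  exact ((hG.isPhantom_sigmaMap _ fun j => hf (e j)).comp_right _).comp_left _

lemma IsPerfect.isPhantom_shift_sigmaMap {G : Set T} (hG : IsPerfect G) (n : ℤ) {ι : Type*}
    [Small.{u} ι] [HasCoproductsOfShape ι T] {X Y : ι → T} (f : ∀ i, X i ⟶ Y i)
    (hf : ∀ i, IsPhantom ((shiftFunctor T (-n)).obj '' G) (f i)) :
    IsPhantom G ((Limits.Sigma.map f)⟦n⟧') := by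
  have hσ : sigmaComparison (shiftFunctor T n) X ≫ (Limits.Sigma.map f)⟦n⟧' =
      Limits.Sigma.map (fun i => (f i)⟦n⟧') ≫ sigmaComparison (shiftFunctor T n) Y := by
    ext i
    simp [← Functor.map_comp]
  rw [(IsIso.eq_inv_comp _).mpr hσ]
  exact ((hG.isPhantom_sigmaMap_of_small _ fun i => (hf i).shift n).comp_right _).comp_left _

/-- if `G` is a perfect set of objects, then every `g ∈ G` is weak
compact with respect to any direct tower whose connecting maps are
`(Σ⁻¹G ∪ G)`-phantoms. -/
theorem perfect_weak_compact (G : Set T) (hG : IsPerfect G) :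
    ∀ g ∈ G, ∀ (Z : ℕ → T) (φ : ∀ i, Z i ⟶ Z (i + 1)),
      (∀ i, ∀ g' ∈ G, (∀ a : g' ⟶ Z i, a ≫ φ i = 0) ∧
        (∀ a : (g'⟦(-1 : ℤ)⟧ : T) ⟶ Z i, a ≫ φ i = 0)) →
      ∀ (L : T) (p : (∐ Z : T) ⟶ L) (q : L ⟶ (∐ Z : T)⟦(1 : ℤ)⟧),
        (Triangle.mk
          (𝟙 (∐ Z) - Sigma.desc (fun i => φ i ≫ Sigma.ι Z (i + 1))) p q
          ∈ distTriang T) →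
        ∀ a : g ⟶ L, a = 0 := by
  intro g hg Z φ hφ L p q hT
  have hφG : ∀ i, IsPhantom G (φ i) := fun i g' hg' => (hφ i g' hg').1
  have hφshift : ∀ i, IsPhantom ((shiftFunctor T (-1)).obj '' G) (φ i) := by
    rintro i _ ⟨g', hg', rfl⟩
    exact (hφ i g' hg').2
  have hd : Sigma.desc (fun i => φ i ≫ Sigma.ι Z (i + 1)) =
      Limits.Sigma.map φ ≫ Sigma.desc fun i => Sigma.ι Z (i + 1) := by
    ext
    simp
  rw [hd] at hT
  refine IsPhantom.eq_zero_of_distTriang_id_sub ?_ ?_ hT hg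
  · exact (hG.isPhantom_sigmaMap_of_small φ hφG).comp_right _
  · rw [Functor.map_comp]
    exact (hG.isPhantom_shift_sigmaMap 1 φ hφshift).comp_right _
end

section
/- Let T be a triangulated category with coproducts satisfying Brown representability, and let G be a compact object of T. Let C be the Brown–Comenetz dual of G, i.e. the object representing the cohomological functor X ↦ Hom_ℤ(T(G,X), ℚ/ℤ). Then for every morphism φ : X → Y in T, T(G,φ) = 0 if and only if T(φ,C) = 0; consequently ({G}, {C}) is a symmetric pair: Φ({G}) = Ψ({C}). -/
open CategoryTheory CategoryTheory.Limits CategoryTheory.Pretriangulated Opposite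

universe u

variable {T : Type u} [Category.{u} T] [Preadditive T] [HasZeroObject T]
  [HasShift T ℤ] [∀ n : ℤ, (shiftFunctor T n).Additive] [Pretriangulated T]
  [HasCoproducts.{u} T] [HasCoproducts.{0} T]

/-- Postcomposition with `f` as a morphism of hom-groups. -/
def postComp (g : T) {X Y : T} (f : X ⟶ Y) : (g ⟶ X) →+ (g ⟶ Y) :=
  AddMonoidHom.mk' (fun a => a ≫ f) (fun a b => by simp [Preadditive.add_comp])

/-- let `g` be a compact object of a triangulated category with
coproducts and let `C` be its Brown–Comenetz dual, i.e. an object representing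
`X ↦ Hom_ℤ(T(g, X), ℚ/ℤ)` naturally. Then for every morphism `φ`, `T(g, φ) = 0`
iff `T(φ, C) = 0`; hence `({g}, {C})` is a symmetric pair: `Φ({g}) = Ψ({C})`. -/
theorem brown_comenetz_symmetric_pair (g : T)
    (hg : ∀ ι : Type, Nonempty (PreservesColimitsOfShape (Discrete ι)
      (coyoneda.obj (op g))))
    (C : T)
    (e : ∀ X : T, (X ⟶ C) ≃+ ((g ⟶ X) →+ AddCircle (1 : ℚ)))
    (he : ∀ (X Y : T) (f : X ⟶ Y) (φ : Y ⟶ C),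
      e X (f ≫ φ) = (e Y φ).comp (postComp g f)) :
    ∀ (X Y : T) (φ : X ⟶ Y),
      (∀ a : g ⟶ X, a ≫ φ = 0) ↔ (∀ b : Y ⟶ C, φ ≫ b = 0) := by
  intro X Y φ
  constructor
  · intro h b
    have := he X Y φ b
    have hz : e X (φ ≫ b) = 0 := by
      rw [this]; ext a
      simp [postComp, h a]
    exact (e X).injective (by simp [hz])
  · intro h a
    apply CharacterModule.eq_zero_of_character_apply
    intro (c : (g ⟶ Y) →+ AddCircle (1 : ℚ))
    have hb : φ ≫ (e Y).symm c = 0 := h _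
    have := he X Y φ ((e Y).symm c)
    rw [hb, map_zero, (e Y).apply_symm_apply] at this
    have := congrArg (fun f => f.toFun a) this
    have h2 : c (a ≫ φ) = 0 := by simpa [postComp] using this.symm
    exact h2
end

section
/- Let T be a triangulated category with products and C a set of objects such that every C in C is weak cocompact with respect to any Σ^{≥0}C-cophantom inverse tower, and suppose C is closed under all shifts (Σ^ℤ C = C, after replacing C by its shift closure). If moreover the stable pair exists, then (^⊥(Σ^ℤ C), (^⊥(Σ^ℤ C))^⊥) is a stable torsion pair and (^⊥(Σ^ℤ C))^⊥ equals the smallest colocalizing subcategory of T containing C. -/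
open CategoryTheory CategoryTheory.Limits CategoryTheory.Pretriangulated

universe u

variable {T : Type u} [Category.{u} T] [Preadditive T] [HasZeroObject T]
  [HasShift T ℤ] [∀ n : ℤ, (shiftFunctor T n).Additive] [Pretriangulated T]
  [HasProducts.{u} T] [HasProducts.{0} T]

/-- A colocalizing subcategory: a strictly full triangulated subcategory closed under
shifts, extensions and arbitrary products. -/
def Colocalizing (S : Set T) : Prop :=
  (∀ A B : T, (A ≅ B) → A ∈ S → B ∈ S) ∧
  (∀ A ∈ S, (A⟦(1 : ℤ)⟧ : T) ∈ S ∧ (A⟦(-1 : ℤ)⟧ : T) ∈ S) ∧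
  (∀ (A B Z : T) (f : A ⟶ B) (g : B ⟶ Z) (h : Z ⟶ A⟦(1 : ℤ)⟧),
    (Triangle.mk f g h ∈ distTriang T) → A ∈ S → Z ∈ S → B ∈ S) ∧
  (∀ (ι : Type u) (f : ι → T), (∀ i, f i ∈ S) → (∏ᶜ f : T) ∈ S)

/-!
Everything but minimality is formal, `^⊥(Σ^ℤ C)` being stable under all shifts.
For `B` in the right orthogonal `Y` of `^⊥(Σ^ℤ C)` and a colocalizing `U` with `Σ^ℤ C ⊆ U ⊆ Y`,
iterate fibres of the `U`-preenvelope `K → ∏_{K ⟶ s, s ∈ U} s`: this gives a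
tower `B ← K₁ ← K₂ ← ⋯` of `U`-cophantom maps, in particular a `Σ^{≥0}C`-cophantom tower. Its
homotopy limit lies in `Y`, which is colocalizing, and in `^⊥(Σ^ℤ C)` by weak cocompactness, so
it is zero. Cophantom maps lift along the tower as cophantom maps, so `K₁ → B` extends to a
compatible family into the tower; such a family factors through the homotopy limit, hence
`K₁ → B` vanishes and `B` is a retract of an object of `U`. Colocalizing subcategories are
closed under retracts, a retract being the homotopy limit of the tower of an idempotent
(Bökstedt–Neeman).
-/

section RightOrthogonal

variable {D : Type*} [Category D] [Preadditive D]

def rightOrthogonal (X : Set D) : Set D := {B | ∀ A ∈ X, ∀ f : A ⟶ B, f = 0}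

variable {X : Set D}

lemma rightOrthogonal_of_iso {B B' : D} (e : B ≅ B') (hB : B ∈ rightOrthogonal X) :
    B' ∈ rightOrthogonal X := fun A hA f ↦ by
  simpa using congrArg (· ≫ e.hom) (hB A hA (f ≫ e.inv))

lemma pi_mem_rightOrthogonal {ι : Type*} (B : ι → D) [HasProduct B]
    (hB : ∀ i, B i ∈ rightOrthogonal X) : ∏ᶜ B ∈ rightOrthogonal X :=
  fun A hA f ↦ Pi.hom_ext _ _ fun i ↦ by simpa using hB i A hA (f ≫ Pi.π B i)

lemma shift_mem_rightOrthogonal [HasShift D ℤ] [∀ n : ℤ, (shiftFunctor D n).Additive]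
    (hX : ∀ A ∈ X, ∀ m : ℤ, A⟦m⟧ ∈ X) {B : D} (hB : B ∈ rightOrthogonal X) (m : ℤ) :
    B⟦m⟧ ∈ rightOrthogonal X := fun A hA f ↦ by
  rw [← (shiftFunctor D (-m)).map_eq_zero_iff,
    ← Preadditive.IsIso.comp_right_eq_zero _ (shiftShiftNeg B m).hom]
  exact hB _ (hX A hA (-m)) _

lemma mem_rightOrthogonal_of_distTriang [HasZeroObject D] [HasShift D ℤ]
    [∀ n : ℤ, (shiftFunctor D n).Additive] [Pretriangulated D] {Tr : Triangle D}
    (hTr : Tr ∈ distTriang D) (h₁ : Tr.obj₁ ∈ rightOrthogonal X)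
    (h₃ : Tr.obj₃ ∈ rightOrthogonal X) : Tr.obj₂ ∈ rightOrthogonal X := fun A hA f ↦ by
  obtain ⟨g, rfl⟩ := Triangle.coyoneda_exact₂ Tr hTr f (h₃ A hA _)
  rw [h₁ A hA g, zero_comp]

end RightOrthogonal

section LeftOrthogonalShifts

variable {D : Type*} [Category D] [Preadditive D] [HasShift D ℤ]

/-- The left orthogonal `^⊥(Σ^ℤ C)`. -/
def leftOrthogonalShifts (C : Set D) : Set D :=
  {A | ∀ c ∈ C, ∀ n : ℤ, ∀ f : A ⟶ c⟦n⟧, f = 0}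

variable {C : Set D}

lemma leftOrthogonalShifts_of_iso {A A' : D} (e : A ≅ A') (hA : A ∈ leftOrthogonalShifts C) :
    A' ∈ leftOrthogonalShifts C := fun c hc n f ↦ by
  simpa using congrArg (e.inv ≫ ·) (hA c hc n (e.hom ≫ f))

lemma shift_mem_rightOrthogonal_leftOrthogonalShifts {c : D} (hc : c ∈ C) (n : ℤ) :
    c⟦n⟧ ∈ rightOrthogonal (leftOrthogonalShifts C) :=
  fun _ hA f ↦ hA c hc n f

lemma subset_rightOrthogonal_leftOrthogonalShifts :
    C ⊆ rightOrthogonal (leftOrthogonalShifts C) := fun c hc ↦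
  rightOrthogonal_of_iso ((shiftFunctorZero D ℤ).app c)
    (shift_mem_rightOrthogonal_leftOrthogonalShifts hc 0)

variable [∀ n : ℤ, (shiftFunctor D n).Additive]

lemma mem_leftOrthogonalShifts_of_shift {A : D} {m : ℤ}
    (hA : A⟦m⟧ ∈ leftOrthogonalShifts C) : A ∈ leftOrthogonalShifts C := fun c hc n f ↦ by
  rw [← (shiftFunctor D m).map_eq_zero_iff,
    ← Preadditive.IsIso.comp_right_eq_zero _ ((shiftFunctorAdd D n m).inv.app c)]
  exact hA c hc (n + m) _

lemma shift_mem_leftOrthogonalShifts_iff {A : D} (m : ℤ) :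
    A⟦m⟧ ∈ leftOrthogonalShifts C ↔ A ∈ leftOrthogonalShifts C :=
  ⟨mem_leftOrthogonalShifts_of_shift, fun hA ↦ mem_leftOrthogonalShifts_of_shift (m := -m)
    (leftOrthogonalShifts_of_iso (shiftShiftNeg A m).symm hA)⟩

end LeftOrthogonalShifts

section Tower

variable {D : Type*} [Category D]

lemma exists_compatible_family {X : D} {Y : ℕ → D} (ψ : ∀ n, Y (n + 1) ⟶ Y n)
    (P : ∀ n, (X ⟶ Y n) → Prop) (g₀ : X ⟶ Y 0) (h₀ : P 0 g₀)
    (hlift : ∀ n g, P n g → ∃ g', g' ≫ ψ n = g ∧ P (n + 1) g') :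
    ∃ g : ∀ n, X ⟶ Y n, g 0 = g₀ ∧ ∀ n, g (n + 1) ≫ ψ n = g n := by
  choose lift hlift_comp hlift_P using hlift
  let G : ∀ n, {g : X ⟶ Y n // P n g} := fun n ↦
    Nat.rec ⟨g₀, h₀⟩ (fun n g ↦ ⟨lift n g.1 g.2, hlift_P n g.1 g.2⟩) n
  exact ⟨fun n ↦ (G n).1, rfl, fun n ↦ hlift_comp n _ _⟩

variable [Preadditive D] (Y : ℕ → D) [HasProduct Y] (ψ : ∀ n, Y (n + 1) ⟶ Y n)

/-- `1 - shift` on `∏ Yₙ`; its fibre is the homotopy limit of the tower. -/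
noncomputable def towerDiff : ∏ᶜ Y ⟶ ∏ᶜ Y :=
  𝟙 _ - Pi.lift fun n ↦ Pi.π Y (n + 1) ≫ ψ n

variable {Y ψ}

lemma comp_towerDiff_eq_zero_iff {X : D} (f : X ⟶ ∏ᶜ Y) :
    f ≫ towerDiff Y ψ = 0 ↔ ∀ n, f ≫ Pi.π Y (n + 1) ≫ ψ n = f ≫ Pi.π Y n := by
  refine ⟨fun h n ↦ ?_, fun h ↦ Pi.hom_ext _ _ fun n ↦ ?_⟩
  · have h' : f ≫ Pi.π Y n - f ≫ Pi.π Y (n + 1) ≫ ψ n = 0 := by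
      simpa [towerDiff] using congrArg (· ≫ Pi.π Y n) h
    exact (sub_eq_zero.1 h').symm
  · simp [towerDiff, h n]

lemma lift_comp_towerDiff {X : D} {g : ∀ n, X ⟶ Y n} (hg : ∀ n, g (n + 1) ≫ ψ n = g n) :
    Pi.lift g ≫ towerDiff Y ψ = 0 :=
  (comp_towerDiff_eq_zero_iff _).2 fun n ↦ by simpa using hg n

lemma eq_zero_of_compatible_of_isZero_holim [HasZeroObject D] [HasShift D ℤ]
    [∀ n : ℤ, (shiftFunctor D n).Additive] [Pretriangulated D] {L : D} {p : L ⟶ ∏ᶜ Y}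
    {q : ∏ᶜ Y ⟶ L⟦(1 : ℤ)⟧} (hT : Triangle.mk p (towerDiff Y ψ) q ∈ distTriang D)
    (hL : IsZero L) {X : D} {g : ∀ n, X ⟶ Y n} (hg : ∀ n, g (n + 1) ≫ ψ n = g n) (n : ℕ) :
    g n = 0 := by
  obtain ⟨w, hw⟩ : ∃ w : X ⟶ L, Pi.lift g = w ≫ p :=
    Triangle.coyoneda_exact₂ _ hT (Pi.lift g) (lift_comp_towerDiff hg)
  have hgn : g n = Pi.lift g ≫ Pi.π Y n := by simp
  rw [hgn, hw, hL.eq_of_tgt w 0, zero_comp, zero_comp]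

end Tower

section WeakCocompact

variable {D : Type*} [Category D] [Preadditive D] [HasZeroObject D] [HasShift D ℤ]
  [∀ n : ℤ, (shiftFunctor D n).Additive] [Pretriangulated D] [HasProductsOfShape ℕ D]

/-- `c` is weak cocompact with respect to every `Σ^{≥0}C`-cophantom inverse tower. -/
def IsWeakCocompactForCophantomTowers (C : Set D) (c : D) : Prop :=
  ∀ (Y : ℕ → D) (ψ : ∀ i, Y (i + 1) ⟶ Y i),
    (∀ i, ∀ c' ∈ C, ∀ n : ℕ, ∀ g : Y i ⟶ c'⟦(n : ℤ)⟧, ψ i ≫ g = 0) →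
    ∀ (L : D) (p : L ⟶ ∏ᶜ Y) (q : ∏ᶜ Y ⟶ L⟦(1 : ℤ)⟧),
      Triangle.mk p (towerDiff Y ψ) q ∈ distTriang D → ∀ f : L ⟶ c, f = 0

end WeakCocompact

section Retract

variable {D : Type*} [Category D] [Preadditive D] {N : D} [HasProduct fun _ : ℕ ↦ N]

lemma isSplitEpi_towerDiff_const {e : N ⟶ N} (he : e ≫ e = e) :
    IsSplitEpi (towerDiff (fun _ ↦ N) fun _ ↦ e) := by
  refine IsSplitEpi.mk' ⟨Pi.lift fun n ↦ Pi.π _ n ≫ (𝟙 N - e) -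
    ∑ k ∈ Finset.range n, Pi.π _ k ≫ e, Pi.hom_ext _ _ fun n ↦ ?_⟩
  simp only [towerDiff, Preadditive.comp_sub, Preadditive.sub_comp, Preadditive.add_comp,
    Preadditive.sum_comp, Category.comp_id, Category.id_comp, Category.assoc, limit.lift_π,
    limit.lift_π_assoc, Fan.mk_pt, Fan.mk_π_app, Discrete.functor_obj_eq_as,
    Finset.sum_range_succ, he, sub_self, zero_sub, neg_add_rev]
  abel

variable [HasZeroObject D] [HasShift D ℤ] [∀ n : ℤ, (shiftFunctor D n).Additive]
  [Pretriangulated D]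

lemma nonempty_iso_holim_of_retract {B : D} {i : B ⟶ N} {r : N ⟶ B} (hir : i ≫ r = 𝟙 B)
    {H : D} {f : H ⟶ ∏ᶜ fun _ : ℕ ↦ N} {q : (∏ᶜ fun _ : ℕ ↦ N) ⟶ H⟦(1 : ℤ)⟧}
    (hT : Triangle.mk f (towerDiff (fun _ ↦ N) fun _ ↦ r ≫ i) q ∈ distTriang D) :
    Nonempty (B ≅ H) := by
  have he : (r ≫ i) ≫ r ≫ i = r ≫ i := by simp [reassoc_of% hir]
  have : Epi (towerDiff (fun _ ↦ N) fun _ ↦ r ≫ i) := (isSplitEpi_towerDiff_const he).epi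
  have : Mono f := Triangle.mono₁ _ hT (Triangle.mor₃_eq_zero_of_epi₂ _ hT this)
  obtain ⟨β, hβ⟩ : ∃ β : B ⟶ H, Pi.lift (fun _ ↦ i) = β ≫ f :=
    Triangle.coyoneda_exact₂ _ hT _ (lift_comp_towerDiff fun _ ↦ by simp [reassoc_of% hir])
  have hstep := (comp_towerDiff_eq_zero_iff f).1 (comp_distTriang_mor_zero₁₂ _ hT)
  have hfix : ∀ n, f ≫ Pi.π _ n ≫ r ≫ i = f ≫ Pi.π _ n := fun n ↦ by
    have h := congrArg (· ≫ r ≫ i) (hstep n)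
    simp only [Category.assoc, reassoc_of% hir] at h
    rw [← h, hstep n]
  have hconst : ∀ n, f ≫ Pi.π _ n = f ≫ Pi.π _ 0 := fun n ↦ by
    induction n with
    | zero => rfl
    | succ n ih => rw [← ih, ← hstep n, hfix]
  refine ⟨⟨β, f ≫ Pi.π _ 0 ≫ r, ?_, ?_⟩⟩
  · simp [← reassoc_of% hβ, hir]
  · refine (cancel_mono f).1 (Pi.hom_ext _ _ fun n ↦ ?_)
    simp [← hβ, hfix, hconst n]

end Retract

section YonedaExact

variable {D : Type*} [Category D] [Preadditive D] [HasZeroObject D] [HasShift D ℤ]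
  [∀ n : ℤ, (shiftFunctor D n).Additive] [Pretriangulated D]

lemma Triangle.yoneda_exact₁ (Tr : Triangle D) (hT : Tr ∈ distTriang D) {W : D}
    (f : Tr.obj₁ ⟶ W) (hf : Tr.mor₃ ≫ f⟦(1 : ℤ)⟧' = 0) : ∃ g : Tr.obj₂ ⟶ W, f = Tr.mor₁ ≫ g := by
  obtain ⟨g, hg, -⟩ := complete_distinguished_triangle_morphism₂ Tr _ hT
    (contractible_distinguished W) f 0 (hf.trans zero_comp.symm)
  exact ⟨g, (Category.comp_id f).symm.trans hg.symm⟩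

end YonedaExact

section Preenvelope

universe v w

variable {D : Type w} [Category.{v} D] [Preadditive D]

/-- `φ` is `U`-cophantom: `T(φ, U) = 0`. -/
def IsCophantom (U : Set D) {X Y : D} (φ : X ⟶ Y) : Prop :=
  ∀ s ∈ U, ∀ h : Y ⟶ s, φ ≫ h = 0

variable [HasProducts.{max v w} D] (U : Set D)

noncomputable abbrev preenvelope (Y : D) : D :=
  ∏ᶜ fun j : Σ s : U, Y ⟶ s ↦ (j.1 : D)

noncomputable def toPreenvelope (Y : D) : Y ⟶ preenvelope U Y :=
  Pi.lift fun j ↦ j.2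

variable {U}

lemma isCophantom_iff_comp_toPreenvelope {X Y : D} (φ : X ⟶ Y) :
    IsCophantom U φ ↔ φ ≫ toPreenvelope U Y = 0 := by
  refine ⟨fun h ↦ Pi.hom_ext _ _ fun j ↦ by simpa [toPreenvelope] using h _ j.1.2 j.2,
    fun h s hs g ↦ ?_⟩
  have hg : toPreenvelope U Y ≫ Pi.π _ (⟨⟨s, hs⟩, g⟩ : Σ s : U, Y ⟶ s) = g :=
    Pi.lift_π _ _
  rw [← hg, reassoc_of% h, zero_comp]

variable [HasZeroObject D] [HasShift D ℤ] [∀ n : ℤ, (shiftFunctor D n).Additive]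
  [Pretriangulated D] (U)

noncomputable def preenvelopeTriangle (Y : D) : Triangle D :=
  Triangle.mk (distinguished_cocone_triangle₁ (toPreenvelope U Y)).choose_spec.choose
    (toPreenvelope U Y)
    (distinguished_cocone_triangle₁ (toPreenvelope U Y)).choose_spec.choose_spec.choose

lemma preenvelopeTriangle_distinguished (Y : D) : preenvelopeTriangle U Y ∈ distTriang D :=
  (distinguished_cocone_triangle₁ (toPreenvelope U Y)).choose_spec.choose_spec.choose_spec

lemma isCophantom_preenvelopeTriangle_mor₁ (Y : D) :
    IsCophantom U (preenvelopeTriangle U Y).mor₁ :=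
  (isCophantom_iff_comp_toPreenvelope _).2
    (comp_distTriang_mor_zero₁₂ _ (preenvelopeTriangle_distinguished U Y))

noncomputable def preenvelopeTower (B : D) : ℕ → D
  | 0 => B
  | n + 1 => (preenvelopeTriangle U (preenvelopeTower B n)).obj₁

noncomputable def preenvelopeTowerMap (B : D) (n : ℕ) :
    preenvelopeTower U B (n + 1) ⟶ preenvelopeTower U B n :=
  (preenvelopeTriangle U (preenvelopeTower U B n)).mor₁

end Preenvelope

namespace Colocalizing

variable {S S' U : Set T}

omit [HasProducts.{0} T] in
lemma inter (hS : Colocalizing S) (hS' : Colocalizing S') : Colocalizing (S ∩ S') :=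
  ⟨fun A B e hA ↦ ⟨hS.1 A B e hA.1, hS'.1 A B e hA.2⟩,
    fun A hA ↦ ⟨⟨(hS.2.1 A hA.1).1, (hS'.2.1 A hA.2).1⟩,
      ⟨(hS.2.1 A hA.1).2, (hS'.2.1 A hA.2).2⟩⟩,
    fun A B Z f g h hT hA hZ ↦
      ⟨hS.2.2.1 A B Z f g h hT hA.1 hZ.1, hS'.2.2.1 A B Z f g h hT hA.2 hZ.2⟩,
    fun ι f hf ↦ ⟨hS.2.2.2 ι f fun i ↦ (hf i).1, hS'.2.2.2 ι f fun i ↦ (hf i).2⟩⟩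

omit [HasProducts.{0} T] in
lemma shift_mem (hS : Colocalizing S) (n : ℤ) {A : T} (hA : A ∈ S) : A⟦n⟧ ∈ S := by
  induction n using Int.induction_on with
  | zero => exact hS.1 _ _ ((shiftFunctorZero T ℤ).symm.app A) hA
  | succ k ih =>
      exact hS.1 _ _ ((shiftFunctorAdd' T (k : ℤ) 1 (k + 1) rfl).symm.app A) (hS.2.1 _ ih).1
  | pred k ih =>
      exact hS.1 _ _ ((shiftFunctorAdd' T (-k : ℤ) (-1) (-k - 1) rfl).symm.app A) (hS.2.1 _ ih).2

omit [HasProducts.{0} T] in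
lemma mem_obj₁ (hS : Colocalizing S) {Tr : Triangle T} (hTr : Tr ∈ distTriang T)
    (h₂ : Tr.obj₂ ∈ S) (h₃ : Tr.obj₃ ∈ S) : Tr.obj₁ ∈ S :=
  hS.2.2.1 _ _ _ _ _ _ (inv_rot_of_distTriang _ hTr) (hS.shift_mem (-1) h₃) h₂

lemma pi_mem (hS : Colocalizing S) {ι : Type} (f : ι → T) (hf : ∀ i, f i ∈ S) : ∏ᶜ f ∈ S :=
  hS.1 _ _ (Pi.reindex Equiv.ulift.{u, 0} f) (hS.2.2.2 (ULift ι) _ fun _ ↦ hf _)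

lemma mem_of_retract (hS : Colocalizing S) {B N : T} (hN : N ∈ S) {i : B ⟶ N} {r : N ⟶ B}
    (hir : i ≫ r = 𝟙 B) : B ∈ S := by
  obtain ⟨H, f, q, hT⟩ :=
    distinguished_cocone_triangle₁ (towerDiff (fun _ : ℕ ↦ N) fun _ ↦ r ≫ i)
  obtain ⟨e⟩ := nonempty_iso_holim_of_retract hir hT
  have hP : (∏ᶜ fun _ : ℕ ↦ N) ∈ S := hS.pi_mem _ fun _ ↦ hN
  exact hS.1 _ _ e.symm (hS.mem_obj₁ hT hP hP)

omit [HasProducts.{0} T] in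
lemma preenvelope_mem (hU : Colocalizing U) (Y : T) : preenvelope U Y ∈ U :=
  hU.2.2.2 _ _ fun j ↦ j.1.2

omit [HasProducts.{0} T] in
lemma exists_isCophantom_lift (hU : Colocalizing U) {X Y : T} {x : X ⟶ Y}
    {d : preenvelope U Y ⟶ X⟦(1 : ℤ)⟧} (hT : Triangle.mk x (toPreenvelope U Y) d ∈ distTriang T)
    {F : T} {ω : F ⟶ Y} (hω : IsCophantom U ω) : ∃ ν : F ⟶ X, ν ≫ x = ω ∧ IsCophantom U ν := by
  -- `Q ∈ U` is built so that `toPreenvelope U Y` factors through `q : Y ⟶ Q`, and so that for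
  -- the fibre `X'` of `q`, the composite `X' ⟶ X ⟶ preenvelope U X` factors through `X' ⟶ Y`.
  obtain ⟨Q, r, u, hQ⟩ :=
    distinguished_cocone_triangle₁ (d ≫ (toPreenvelope U X)⟦(1 : ℤ)⟧')
  have hQU : Q ∈ U :=
    hU.mem_obj₁ hQ (hU.preenvelope_mem Y) (hU.shift_mem 1 (hU.preenvelope_mem X))
  have hηd : toPreenvelope U Y ≫ d = 0 := comp_distTriang_mor_zero₂₃ _ hT
  have h₂₃ : toPreenvelope U Y ≫ d ≫ (toPreenvelope U X)⟦(1 : ℤ)⟧' = 0 := by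
    rw [reassoc_of% hηd, zero_comp]
  have hr : r ≫ d ≫ (toPreenvelope U X)⟦(1 : ℤ)⟧' = 0 := comp_distTriang_mor_zero₁₂ _ hQ
  obtain ⟨q, hq⟩ : ∃ q : Y ⟶ Q, toPreenvelope U Y = q ≫ r :=
    Triangle.coyoneda_exact₂ _ hQ _ h₂₃
  obtain ⟨X', x', d', hT'⟩ := distinguished_cocone_triangle₁ q
  obtain ⟨φ, hφ₁, hφ₃⟩ : ∃ φ : X' ⟶ X, x' ≫ 𝟙 Y = φ ≫ x ∧ d' ≫ φ⟦(1 : ℤ)⟧' = r ≫ d :=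
    complete_distinguished_triangle_morphism₁ _ _ hT' hT (𝟙 Y) r
      (hq.symm.trans (Category.id_comp _).symm)
  obtain ⟨θ, hθ⟩ : ∃ θ : Y ⟶ preenvelope U X, φ ≫ toPreenvelope U X = x' ≫ θ :=
    Triangle.yoneda_exact₁ _ hT' _ (by
      show d' ≫ (φ ≫ toPreenvelope U X)⟦(1 : ℤ)⟧' = 0
      rw [Functor.map_comp, reassoc_of% hφ₃, hr])
  obtain ⟨l, hl⟩ : ∃ l : F ⟶ X', ω = l ≫ x' := Triangle.coyoneda_exact₂ _ hT' ω (hω Q hQU q)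
  refine ⟨l ≫ φ, by simp [hl, ← hφ₁], ?_⟩
  rw [isCophantom_iff_comp_toPreenvelope, Category.assoc, hθ, ← Category.assoc, ← hl]
  exact hω _ (hU.preenvelope_mem X) θ

end Colocalizing

omit [HasProducts.{0} T] in
lemma rightOrthogonal_colocalizing {X : Set T} (hX : ∀ A ∈ X, ∀ m : ℤ, A⟦m⟧ ∈ X) :
    Colocalizing (rightOrthogonal X) :=
  ⟨fun _ _ e ↦ rightOrthogonal_of_iso e,
    fun _ hA ↦ ⟨shift_mem_rightOrthogonal hX hA 1, shift_mem_rightOrthogonal hX hA (-1)⟩,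
    fun _ _ _ _ _ _ hT hA hZ ↦ mem_rightOrthogonal_of_distTriang hT hA hZ,
    fun _ f hf ↦ pi_mem_rightOrthogonal f hf⟩

theorem rightOrthogonal_leftOrthogonalShifts_subset {C U : Set T}
    (hshift : ∀ (n : ℤ), ∀ c ∈ C, c⟦n⟧ ∈ C)
    (hw : ∀ c ∈ C, IsWeakCocompactForCophantomTowers C c)
    (hU : Colocalizing U) (hCU : ∀ c ∈ C, ∀ n : ℤ, c⟦n⟧ ∈ U)
    (hUY : U ⊆ rightOrthogonal (leftOrthogonalShifts C)) :
    rightOrthogonal (leftOrthogonalShifts C) ⊆ U := by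
  intro B hB
  have hY : Colocalizing (rightOrthogonal (leftOrthogonalShifts C)) :=
    rightOrthogonal_colocalizing fun A hA m ↦ (shift_mem_leftOrthogonalShifts_iff m).2 hA
  let K := preenvelopeTower U B
  let k := preenvelopeTowerMap U B
  have hK : ∀ n, preenvelopeTriangle U (K n) ∈ distTriang T :=
    fun n ↦ preenvelopeTriangle_distinguished U (K n)
  have hKY : ∀ n, K n ∈ rightOrthogonal (leftOrthogonalShifts C) := by
    intro n
    induction n with
    | zero => exact hB
    | succ n ih => exact hY.mem_obj₁ (hK n) ih (hUY (hU.preenvelope_mem _))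
  have hk : ∀ n, IsCophantom U (k n) := fun n ↦ isCophantom_preenvelopeTriangle_mor₁ U (K n)
  obtain ⟨L, p, q, hL⟩ := distinguished_cocone_triangle₁ (towerDiff K k)
  have hLX : L ∈ leftOrthogonalShifts C := fun c hc m f ↦
    hw _ (hshift m c hc) K k (fun n c' hc' j g ↦ hk n _ (hCU c' hc' j) g) L p q hL f
  have hLY : L ∈ rightOrthogonal (leftOrthogonalShifts C) :=
    hY.mem_obj₁ hL (hY.pi_mem K hKY) (hY.pi_mem K hKY)
  have hL0 : IsZero L := (IsZero.iff_id_eq_zero L).2 (hLY L hLX (𝟙 L))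
  obtain ⟨g, hg₀, hg⟩ := exists_compatible_family k (fun _ ↦ IsCophantom U) (k 0) (hk 0)
    fun n _ hφ ↦ hU.exists_isCophantom_lift (hK n) hφ
  have hk₀ : k 0 = 0 := hg₀ ▸ eq_zero_of_compatible_of_isZero_holim hL hL0 hg 0
  obtain ⟨σ, hσ⟩ := Triangle.yoneda_exact₂ _ (hK 0) (𝟙 B)
    ((Category.comp_id _).trans hk₀)
  exact hU.mem_of_retract (hU.preenvelope_mem B) hσ.symm

/-- if every object of `C` is weak cocompact with respect to any
`Σ^{≥0}C`-cophantom tower, `C` is closed under all shifts, and the stable pair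
exists, then `(^⊥(Σ^ℤ C), (^⊥(Σ^ℤ C))^⊥)` is a stable torsion pair and
`(^⊥(Σ^ℤ C))^⊥` is the smallest colocalizing subcategory of `T` containing `C`. -/
theorem stable_pair_and_smallest_colocalizing (C : Set T)
    (hshift : ∀ (n : ℤ), ∀ c ∈ C, (c⟦n⟧ : T) ∈ C)
    (hw : ∀ c ∈ C, ∀ (Y : ℕ → T) (ψ : ∀ i, Y (i + 1) ⟶ Y i),
      (∀ i, ∀ c' ∈ C, ∀ n : ℕ, ∀ g : Y i ⟶ (c'⟦(n : ℤ)⟧ : T), ψ i ≫ g = 0) →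
      ∀ (L : T) (p : L ⟶ ∏ᶜ Y) (q : (∏ᶜ Y : T) ⟶ L⟦(1 : ℤ)⟧),
        (Triangle.mk p (𝟙 (∏ᶜ Y) - Pi.lift (fun i => Pi.π Y (i + 1) ≫ ψ i)) q
          ∈ distTriang T) →
        ∀ f : L ⟶ c, f = 0)
    (Xcl Ycl : Set T)
    (hXcl : Xcl = {A : T | ∀ c ∈ C, ∀ n : ℤ, ∀ f : A ⟶ (c⟦n⟧ : T), f = 0})
    (hYcl : Ycl = {B : T | ∀ A ∈ Xcl, ∀ f : A ⟶ B, f = 0})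
    -- the stable pair exists: every object admits a decomposition triangle
    (hpair : ∀ t : T, ∃ (A B : T) (f : A ⟶ t) (g : t ⟶ B) (h : B ⟶ A⟦(1 : ℤ)⟧),
      (Triangle.mk f g h ∈ distTriang T) ∧ A ∈ Xcl ∧ B ∈ Ycl) :
    -- `(Xcl, Ycl)` is a stable torsion pair …
    ((∀ A ∈ Xcl, ∀ B ∈ Ycl, ∀ f : A ⟶ B, f = 0) ∧
      (∀ t : T, ∃ (A B : T) (f : A ⟶ t) (g : t ⟶ B) (h : B ⟶ A⟦(1 : ℤ)⟧),
        (Triangle.mk f g h ∈ distTriang T) ∧ A ∈ Xcl ∧ B ∈ Ycl) ∧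
      (∀ A : T, A ∈ Xcl ↔ (A⟦(1 : ℤ)⟧ : T) ∈ Xcl)) ∧
    -- … and `Ycl` is the smallest colocalizing subcategory containing `C`
    (Colocalizing Ycl ∧ C ⊆ Ycl ∧
      ∀ S : Set T, Colocalizing S → C ⊆ S → Ycl ⊆ S) := by
  obtain rfl : Xcl = leftOrthogonalShifts C := hXcl
  obtain rfl : Ycl = rightOrthogonal (leftOrthogonalShifts C) := hYcl
  have hX (A) (hA : A ∈ leftOrthogonalShifts C) (m : ℤ) : A⟦m⟧ ∈ leftOrthogonalShifts C :=
    (shift_mem_leftOrthogonalShifts_iff m).2 hA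
  have hY := rightOrthogonal_colocalizing hX
  refine ⟨⟨fun A hA B hB ↦ hB A hA, hpair, fun A ↦ (shift_mem_leftOrthogonalShifts_iff 1).symm⟩,
    hY, subset_rightOrthogonal_leftOrthogonalShifts, fun S hS hCS ↦ ?_⟩
  refine subset_trans (rightOrthogonal_leftOrthogonalShifts_subset hshift hw (hS.inter hY)
    (fun c hc n ↦ ⟨hS.shift_mem n (hCS hc), shift_mem_rightOrthogonal_leftOrthogonalShifts hc n⟩)
    Set.inter_subset_right) Set.inter_subset_left
end
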